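/- Every double of the infinite cyclic group Z is virtually Z × F_s for some s ≥ 0. Precisely: for positive integers m_1,...,m_k, the fundamental group of the graph of groups with two infinite cyclic vertex groups ⟨α⟩ and ⟨β⟩ and k infinite cyclic edge groups, the i-th edge group amalgamating α^{m_i} with β^{m_i}, has a subgroup of finite index (namely of index M = lcm(m_1,...,m_k)) isomorphic to Z × F_s, where s + 1 = m_1 + m_2 + ... + m_k and F_s is the free group of rank s. -/

import Mathlib

open scoped Classical
open scoped commutatorElement

namespace KO

noncomputable section

/-- The number of positions of a list satisfying a predicate. -/
def countP {α : Type*} (L : List α) (P : α → Prop) : ℕ :=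
  {i : Fin L.length | P (L.get i)}.ncard

/-- cyclic successor in `Fin m` -/
def cyc {m : ℕ} (i : Fin m) : Fin m := ⟨(i.val + 1) % m, Nat.mod_lt _ i.pos⟩

/-- cyclic predecessor in `Fin m` -/
def cycPrev {m : ℕ} (i : Fin m) : Fin m := ⟨(i.val + m - 1) % m, Nat.mod_lt _ i.pos⟩

/-! ## Letters and words in free groups -/

/-- A letter: a generator together with a sign (`true` = positive). -/
abbrev Letter (n : ℕ) := Fin n × Bool

/-- The inverse letter. -/
def Letter.inv {n : ℕ} (x : Letter n) : Letter n := (x.1, !x.2)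

/-- A reduced word (element of the free group) is cyclically reduced if its last letter
does not cancel with its first letter. -/
def CyclicallyReduced {n : ℕ} (w : FreeGroup (Fin n)) : Prop :=
  ∀ p q : Letter n, w.toWord.head? = some p → w.toWord.getLast? = some q →
    ¬ (q.1 = p.1 ∧ q.2 = !p.2)

/-- Sum of the lengths of the words in a list. -/
def totalLength {n : ℕ} (U : List (FreeGroup (Fin n))) : ℕ :=
  (U.map fun u => u.toWord.length).sum

/-- A list of words is minimal if no automorphism of the free group reduces the total length. -/
def Minimal {n : ℕ} (U : List (FreeGroup (Fin n))) : Prop :=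
  ∀ φ : FreeGroup (Fin n) ≃* FreeGroup (Fin n),
    totalLength U ≤ totalLength (U.map fun u => φ u)

/-- A list of words is `k`-regular if every generator is used (with either sign) exactly `k`
times in total among the words of the list. -/
def KRegular {n : ℕ} (k : ℕ) (U : List (FreeGroup (Fin n))) : Prop :=
  ∀ i : Fin n, (U.map fun u => (u.toWord.filter fun p => decide (p.1 = i)).length).sum = k

/-- `x` is conjugate into the subgroup `A`. -/
def ConjugateInto {G : Type*} [Group G] (x : G) (A : Subgroup G) : Prop :=
  ∃ g : G, g⁻¹ * x * g ∈ A

/-- `G` is the internal free product of its subgroups `A` and `B`. -/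
def IsInternalFreeProduct {G : Type*} [Group G] (A B : Subgroup G) : Prop :=
  Function.Bijective (Monoid.Coprod.lift A.subtype B.subtype)

/-- `G` is the internal free product of the family of subgroups `H`. -/
def IsInternalFreeProductI {G : Type*} [Group G] {ι : Type*} (H : ι → Subgroup G) : Prop :=
  Function.Bijective (Monoid.CoprodI.lift fun i => (H i).subtype)

/-- A list of words in a free group is diskbusting if the free group admits no nontrivial
free product decomposition such that every word of the list is conjugate into one of the
two factors. -/
def Diskbusting {n : ℕ} (U : List (FreeGroup (Fin n))) : Prop :=
  ¬ ∃ A B : Subgroup (FreeGroup (Fin n)), A ≠ ⊥ ∧ B ≠ ⊥ ∧ IsInternalFreeProduct A B ∧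
      ∀ u ∈ U, ConjugateInto u A ∨ ConjugateInto u B

/-! ## The double of a free group along a list of words -/

/-- The inclusion of `F_n` onto the first copy of the generators. -/
def toA {n : ℕ} (r : ℕ) : FreeGroup (Fin n) →* FreeGroup ((Fin n ⊕ Fin n) ⊕ Fin r) :=
  FreeGroup.map (fun i => Sum.inl (Sum.inl i))

/-- The inclusion of `F_n` onto the second copy of the generators. -/
def toB {n : ℕ} (r : ℕ) : FreeGroup (Fin n) →* FreeGroup ((Fin n ⊕ Fin n) ⊕ Fin r) :=
  FreeGroup.map (fun i => Sum.inl (Sum.inr i))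

/-- The relators `u₁ v₁⁻¹` and `tᵢ⁻¹ uᵢ tᵢ vᵢ⁻¹` (`i = 2, …, r`) of the double `D(U)`. -/
def doubleRels {n : ℕ} (U : List (FreeGroup (Fin n))) :
    Set (FreeGroup ((Fin n ⊕ Fin n) ⊕ Fin (U.length - 1))) :=
  { r | ∃ i : Fin U.length,
      ((i : ℕ) = 0 ∧ r = toA _ (U.get i) * (toB _ (U.get i))⁻¹) ∨
      (∃ j : Fin (U.length - 1), (i : ℕ) = (j : ℕ) + 1 ∧
        r = (FreeGroup.of (Sum.inr j))⁻¹ * toA _ (U.get i) * FreeGroup.of (Sum.inr j) *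
            (toB _ (U.get i))⁻¹) }

/-- The double `D(U)` of the free group `F_n` along the list of words `U`, given by the
presentation `⟨𝒜, ℬ, t₂, …, t_r ∣ u₁ = v₁, uᵢ^{tᵢ} = vᵢ (i = 2, …, r)⟩`. -/
abbrev Double {n : ℕ} (U : List (FreeGroup (Fin n))) :=
  PresentedGroup (doubleRels U)

/-! ## Surface groups -/

/-- The surface relator `∏ [aᵢ, bᵢ]`. -/
def surfaceRelO (g : ℕ) : FreeGroup (Fin g ⊕ Fin g) :=
  (List.ofFn fun i : Fin g => ⁅(FreeGroup.of (Sum.inl i) : FreeGroup (Fin g ⊕ Fin g)), FreeGroup.of (Sum.inr i)⁆).prod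

/-- The fundamental group of the closed orientable surface of genus `g`. -/
abbrev OrientableSurfaceGroup (g : ℕ) := PresentedGroup ({surfaceRelO g} : Set _)

/-- The surface relator `a₁² ⋯ a_g²`. -/
def surfaceRelN (g : ℕ) : FreeGroup (Fin g) :=
  (List.ofFn fun i : Fin g => (FreeGroup.of i) ^ 2).prod

/-- The fundamental group of the closed non-orientable surface of genus `g`. -/
abbrev NonorientableSurfaceGroup (g : ℕ) := PresentedGroup ({surfaceRelN g} : Set _)

/-- A hyperbolic surface group: the fundamental group of a closed surface of negative
Euler characteristic. -/
def IsHyperbolicSurfaceGroup (H : Type*) [Group H] : Prop :=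
  (∃ g : ℕ, 2 ≤ g ∧ Nonempty (H ≃* OrientableSurfaceGroup g)) ∨
  (∃ g : ℕ, 3 ≤ g ∧ Nonempty (H ≃* NonorientableSurfaceGroup g))

/-- `G` contains a hyperbolic surface group. -/
def HasHyperbolicSurfaceSubgroup (G : Type*) [Group G] : Prop :=
  ∃ H : Subgroup G, IsHyperbolicSurfaceGroup H

/-! ## Ends of groups -/

/-- The Cayley graph of a group with respect to a set of generators. -/
def cayleyGraph (G : Type*) [Group G] (S : Set G) : SimpleGraph G where
  Adj x y := x ≠ y ∧ (x⁻¹ * y ∈ S ∨ y⁻¹ * x ∈ S)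
  symm := ⟨fun x y h => ⟨h.1.symm, h.2.symm⟩⟩
  loopless := ⟨fun x h => h.1 rfl⟩

/-- A group is one-ended if the Cayley graph with respect to any finite generating set
has exactly one end. -/
def OneEnded (G : Type*) [Group G] : Prop :=
  ∀ S : Set G, S.Finite → Subgroup.closure S = ⊤ →
    Nat.card ((cayleyGraph G S).end) = 1

/-! ## Multigraphs (loops and parallel edges allowed) -/

/-- A multigraph on a vertex type `V` with edge type `E`: each edge has an unordered
pair of endpoints. -/
structure Multigraph (V : Type*) (E : Type*) where
  ends : E → Sym2 V

namespace Multigraph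

variable {V E : Type*} (G : Multigraph V E)

/-- The set of non-loop edges incident with `v` (denoted `δ(v)`). -/
def edgeNbhd (v : V) : Set E := {e | v ∈ G.ends e ∧ ¬ (G.ends e).IsDiag}

/-- The set of edges with exactly one endpoint in `X` (denoted `δ(X)`). -/
def cut (X : Set V) : Set E := {e | ∃ a b, G.ends e = s(a, b) ∧ a ∈ X ∧ b ∉ X}

/-- Degree of a vertex: loops counted twice. -/
def deg (v : V) : ℕ :=
  2 * {e | G.ends e = Sym2.diag v}.ncard + (G.edgeNbhd v).ncard

/-- Two vertices joined by an edge. -/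
def Adj (a b : V) : Prop := ∃ e, G.ends e = s(a, b)

/-- Two vertices in the same connected component. -/
def Reach : V → V → Prop := Relation.EqvGen G.Adj

/-- The connected component of a vertex. -/
def component (v : V) : Set V := {x | G.Reach v x}

/-- A path from `x` to `y` in a multigraph: distinct vertices, distinct edges. -/
structure PathIn (x y : V) where
  len : ℕ
  v : Fin (len + 1) → V
  e : Fin len → E
  vinj : Function.Injective v
  einj : Function.Injective e
  hx : v 0 = x
  hy : v (Fin.last len) = y
  hends : ∀ i : Fin len, G.ends (e i) = s(v i.castSucc, v i.succ)

/-- The local edge-connectivity `λ(x,y)`: the maximum number of pairwise edge-disjoint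
paths from `x` to `y`. -/
def localEdgeConn (x y : V) : ℕ :=
  sSup {k : ℕ | ∃ P : Fin k → G.PathIn x y,
    ∀ i j, i ≠ j → ∀ a b, (P i).e a ≠ (P j).e b}

/-- A cycle in a multigraph `G`: a connected 2-regular subgraph, given by cyclically
arranged distinct vertices and distinct edges. -/
structure CycleIn where
  len : ℕ
  pos : 0 < len
  v : Fin len → V
  e : Fin len → E
  vinj : Function.Injective v
  einj : Function.Injective e
  hends : ∀ i : Fin len, G.ends (e i) = s(v i, v (cyc i))

variable {G}

/-- The cycle `C` contains the edge `x`. -/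
def CycleIn.HasEdge (C : G.CycleIn) (x : E) : Prop := ∃ i, C.e i = x

/-- The number of cycles in the list `L` containing both edges `x` and `y`. -/
def countBoth (L : List G.CycleIn) (x y : E) : ℕ :=
  countP L fun C => C.HasEdge x ∧ C.HasEdge y

/-- The number of cycles in the list `L` containing the edge `x`. -/
def countWith (L : List G.CycleIn) (x : E) : ℕ :=
  countP L fun C => C.HasEdge x

/-- Two edges `a = b`, or `a` and `b` share no vertex (so `{a, b}` is a matching). -/
def IsMatchingPair (G : Multigraph V E) (a b : E) : Prop :=
  a = b ∨ ∀ z : V, ¬ (z ∈ G.ends a ∧ z ∈ G.ends b)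

end Multigraph

/-! ## The Whitehead graph of a list of words -/

/-- The letter list of the `i`-th word of `U`. -/
def wordAt {n : ℕ} (U : List (FreeGroup (Fin n))) (i : Fin U.length) : List (Letter n) :=
  (U.get i).toWord

/-- Edges of the Whitehead graph `W(U)`: one edge for each position (cyclic) in each word. -/
def WEdge {n : ℕ} (U : List (FreeGroup (Fin n))) : Type :=
  Σ i : Fin U.length, Fin (wordAt U i).length

/-- The letter at a position. -/
def wLetter {n : ℕ} {U : List (FreeGroup (Fin n))} (e : WEdge U) : Letter n :=
  (wordAt U e.1).get e.2

/-- The cyclically next position. -/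
def wNext {n : ℕ} {U : List (FreeGroup (Fin n))} (e : WEdge U) : WEdge U := ⟨e.1, cyc e.2⟩

/-- The cyclically previous position. -/
def wPrev {n : ℕ} {U : List (FreeGroup (Fin n))} (e : WEdge U) : WEdge U := ⟨e.1, cycPrev e.2⟩

/-- The Whitehead graph `W(U)`: vertices are the letters `a₁^{±1}, …, a_n^{±1}`, and each
length-2 cyclic subword `xy` of a word of `U` gives an edge joining `x` and `y⁻¹`. -/
def whiteheadGraph {n : ℕ} (U : List (FreeGroup (Fin n))) : Multigraph (Letter n) (WEdge U) :=
  ⟨fun e => s(wLetter e, Letter.inv (wLetter (wNext e)))⟩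

/-- The connecting map `σ_v` associated with `W(U)` at the vertex `v`: the edge coming
from the length-2 cyclic subword `x_i x_{i+1}` (with `x_{i+1}⁻¹ = v`) is sent to the edge
coming from the following length-2 cyclic subword `x_{i+1} x_{i+2}`. -/
def connMap {n : ℕ} (U : List (FreeGroup (Fin n))) (v : Letter n) (e : WEdge U) : WEdge U :=
  if Letter.inv (wLetter (wNext e)) = v then wNext e else wPrev e

/-- The connecting-map step relation: `σ_v(e) = e'` (in particular `e ∈ δ(v)`). -/
def ConnStep {n : ℕ} (U : List (FreeGroup (Fin n))) (v : Letter n) (e e' : WEdge U) : Prop :=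
  e ∈ (whiteheadGraph U).edgeNbhd v ∧
  ((Letter.inv (wLetter (wNext e)) = v ∧ e' = wNext e) ∨
   (wLetter e = v ∧ e' = wPrev e))


/-! ## Polygonal surfaces and polygonality -/

/-- Combinatorial data for a side-pairing on polygonal disks `P₁, …, P_m`, whose sides
carry letters (an orientation and a label by generators), together with, for each pair of
identified sides, the information `par` of whether the gluing homeomorphism matches the two
boundary orientations. -/
structure PolygonalSurface (n : ℕ) where
  m : ℕ
  L : Fin m → ℕ
  Lpos : ∀ i, 0 < L i
  lab : (Σ i : Fin m, Fin (L i)) → Letter n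
  pair : (Σ i : Fin m, Fin (L i)) → (Σ i : Fin m, Fin (L i))
  pair_invol : ∀ s, pair (pair s) = s
  pair_ne : ∀ s, pair s ≠ s
  par : (Σ i : Fin m, Fin (L i)) → Bool
  par_pair : ∀ s, par (pair s) = par s
  lab_pair : ∀ s, lab (pair s) = if par s then lab s else Letter.inv (lab s)

namespace PolygonalSurface

variable {n : ℕ} (P : PolygonalSurface n)

/-- The next side along the boundary of a polygon. -/
def nextSide (s : Σ i : Fin P.m, Fin (P.L i)) : Σ i : Fin P.m, Fin (P.L i) :=
  ⟨s.1, cyc s.2⟩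

/-- The identifications of the polygon corners induced by the side-pairing: the corner
`s` is the tail of the side `s` and the head of the preceding side. -/
def cornerRel (c d : Σ i : Fin P.m, Fin (P.L i)) : Prop :=
  ∃ s, (c = s ∧ d = (if P.par s then P.pair s else P.nextSide (P.pair s))) ∨
       (c = P.nextSide s ∧ d = (if P.par s then P.nextSide (P.pair s) else P.pair s))

/-- The vertex set of the quotient closed surface. -/
def VertexSpace : Type _ := Quot P.cornerRel

/-- The vertex of the quotient surface corresponding to a corner. -/
def vClass (c : Σ i : Fin P.m, Fin (P.L i)) : P.VertexSpace := Quot.mk _ c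

/-- The corner at an end of a side (`b = false`: tail, `b = true`: head). -/
def endCorner (s : Σ i : Fin P.m, Fin (P.L i)) (b : Bool) : Σ i : Fin P.m, Fin (P.L i) :=
  if b then P.nextSide s else s

/-- The direction (half-edge of the wedge of circles) read when leaving the given end of
the side `s` along `s`. -/
def endDir (s : Σ i : Fin P.m, Fin (P.L i)) (b : Bool) : Letter n :=
  if b then Letter.inv (P.lab s) else P.lab s

/-- The end of the paired side representing the same edge-end of the quotient surface. -/
def pairedEnd (s : Σ i : Fin P.m, Fin (P.L i)) (b : Bool) :
    (Σ i : Fin P.m, Fin (P.L i)) × Bool :=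
  (P.pair s, if P.par s then b else !b)

/-- The induced map from the 1-skeleton of the quotient surface to the wedge of circles is
locally injective: at each vertex, distinct edge-ends have distinct directions. -/
def LocallyInjective : Prop :=
  ∀ s₁ b₁ s₂ b₂, P.vClass (P.endCorner s₁ b₁) = P.vClass (P.endCorner s₂ b₂) →
    P.endDir s₁ b₁ = P.endDir s₂ b₂ →
    ((s₁, b₁) = (s₂, b₂) ∨ (s₂, b₂) = P.pairedEnd s₁ b₁)

/-- The condition `χ(S) < m`, i.e. `V - E < 0` for the quotient surface. -/
def EulerLt : Prop :=
  2 * Nat.card P.VertexSpace < ∑ i : Fin P.m, P.L i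

/-- The boundary word of the `i`-th polygon. -/
def bdWord (i : Fin P.m) : List (Letter n) :=
  List.ofFn fun j : Fin (P.L i) => P.lab ⟨i, j⟩

/-- Every polygon boundary reads a nontrivial power of a word of `U` (up to choice of
base point and orientation). -/
def ReadsPowersOf (U : List (FreeGroup (Fin n))) : Prop :=
  ∀ i : Fin P.m, ∃ u ∈ U, ∃ k r : ℕ, 1 ≤ k ∧
    (P.bdWord i = (List.flatten (List.replicate k u.toWord)).rotate r ∨
     P.bdWord i = (List.flatten (List.replicate k (u⁻¹).toWord)).rotate r)

end PolygonalSurface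

/-- A list of cyclically reduced words in the free group is polygonal if some closed
surface obtained from a side-pairing on polygonal disks admits an immersion of its
1-skeleton into the wedge of `n` circles such that every polygon boundary reads a
nontrivial power of a word of `U` and `χ(S) < m`. -/
def Polygonal {n : ℕ} (U : List (FreeGroup (Fin n))) : Prop :=
  ∃ P : PolygonalSurface n, P.ReadsPowersOf U ∧ P.LocallyInjective ∧ P.EulerLt

/-! ## Directed graphs -/

/-- A directed multigraph. -/
structure Digraph (V : Type*) (E : Type*) where
  src : E → V
  tgt : E → V

namespace Digraph

variable {V E : Type*} (D : Digraph V E)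

def inDeg (v : V) : ℕ := {e | D.tgt e = v}.ncard
def outDeg (v : V) : ℕ := {e | D.src e = v}.ncard

/-- Adjacency in the underlying undirected graph. -/
def Adj (a b : V) : Prop := ∃ e, (D.src e = a ∧ D.tgt e = b) ∨ (D.src e = b ∧ D.tgt e = a)

/-- Same connected component. -/
def Reach : V → V → Prop := Relation.EqvGen D.Adj

/-- The connected component of a vertex. -/
def component (v : V) : Set V := {x | D.Reach v x}

/-- `S` is (the vertex set of) a connected component of `D` that is a directed path of
length `k` whose initial vertex is colored `c₁` and terminal vertex is colored `c₂`
(`true` = red, `false` = blue). -/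
def IsPathComp (col : V → Option Bool) (S : Set V) (k : ℕ) (c₁ c₂ : Bool) : Prop :=
  ∃ (vs : Fin (k + 1) → V) (es : Fin k → E),
    Function.Injective vs ∧ Function.Injective es ∧ S = Set.range vs ∧
    (∀ i : Fin k, D.src (es i) = vs i.castSucc ∧ D.tgt (es i) = vs i.succ) ∧
    (∀ e : E, (D.src e ∈ S ∨ D.tgt e ∈ S) → ∃ i, es i = e) ∧
    col (vs 0) = some c₁ ∧ col (vs (Fin.last k)) = some c₂

/-- `S` is (the vertex set of) a connected component of `D` that is a directed cycle of
length `k`. -/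
def IsCycleComp (S : Set V) (k : ℕ) : Prop :=
  ∃ (vs : Fin k → V) (es : Fin k → E),
    Function.Injective vs ∧ Function.Injective es ∧ S = Set.range vs ∧
    (∀ i : Fin k, D.src (es i) = vs i ∧ D.tgt (es i) = vs (cyc i)) ∧
    (∀ e : E, (D.src e ∈ S ∨ D.tgt e ∈ S) → ∃ i, es i = e)

/-- A path or cycle is short if its length is less than three. -/
def Short (k : ℕ) : Prop := k < 3

/-- At most half of the vertices of `S` are red and at most half are blue. -/
def GoodOn (col : V → Option Bool) (S : Set V) : Prop :=
  2 * {v | v ∈ S ∧ col v = some true}.ncard ≤ S.ncard ∧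
  2 * {v | v ∈ S ∧ col v = some false}.ncard ≤ S.ncard

/-- The connected components of `D` contained in `S`. -/
def compsIn (S : Set V) : Set (Set V) := {C | ∃ v ∈ S, C = D.component v}

variable (col : V → Option Bool)

/-- Type (1): a short R-R path, a short B-B path, and possibly a short cycle. -/
def Type1 (S : Set V) : Prop :=
  ∃ C₁ C₂, C₁ ≠ C₂ ∧
    (∃ k, Short k ∧ D.IsPathComp col C₁ k true true) ∧
    (∃ k, Short k ∧ D.IsPathComp col C₂ k false false) ∧
    (D.compsIn S = {C₁, C₂} ∨
      ∃ C₃, C₃ ≠ C₁ ∧ C₃ ≠ C₂ ∧ (∃ k, Short k ∧ D.IsCycleComp C₃ k) ∧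
        D.compsIn S = {C₁, C₂, C₃})

/-- Type (2): a monochromatic path and one or two short cycles. -/
def Type2 (S : Set V) : Prop :=
  ∃ C₀ c, (∃ k, D.IsPathComp col C₀ k c c) ∧
    ((∃ C₁, C₁ ≠ C₀ ∧ (∃ k, Short k ∧ D.IsCycleComp C₁ k) ∧ D.compsIn S = {C₀, C₁}) ∨
     (∃ C₁ C₂, C₁ ≠ C₀ ∧ C₂ ≠ C₀ ∧ C₁ ≠ C₂ ∧
        (∃ k, Short k ∧ D.IsCycleComp C₁ k) ∧ (∃ k, Short k ∧ D.IsCycleComp C₂ k) ∧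
        D.compsIn S = {C₀, C₁, C₂}))

/-- Type (3): a short cycle, a B-R path, and an R-B path. -/
def Type3 (S : Set V) : Prop :=
  ∃ C₁ C₂ C₃, C₁ ≠ C₂ ∧ C₁ ≠ C₃ ∧ C₂ ≠ C₃ ∧
    (∃ k, Short k ∧ D.IsCycleComp C₁ k) ∧
    (∃ k, D.IsPathComp col C₂ k false true) ∧
    (∃ k, D.IsPathComp col C₃ k true false) ∧
    D.compsIn S = {C₁, C₂, C₃}

/-- Type (4): at least two short cycles. -/
def Type4 (S : Set V) : Prop :=
  (∀ C ∈ D.compsIn S, ∃ k, Short k ∧ D.IsCycleComp C k) ∧ 2 ≤ (D.compsIn S).ncard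

/-- Type (5): a long monochromatic path and monochromatic short paths, possibly none. -/
def Type5 (S : Set V) : Prop :=
  ∃ C₀ ∈ D.compsIn S, (∃ k c, ¬ Short k ∧ D.IsPathComp col C₀ k c c) ∧
    ∃ c', ∀ C ∈ D.compsIn S, C ≠ C₀ → ∃ k, Short k ∧ D.IsPathComp col C k c' c'

/-- Type (6): a B-R path, an R-B path, and monochromatic short paths, possibly none. -/
def Type6 (S : Set V) : Prop :=
  ∃ C₁ ∈ D.compsIn S, ∃ C₂ ∈ D.compsIn S, C₁ ≠ C₂ ∧
    (∃ k, D.IsPathComp col C₁ k false true) ∧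
    (∃ k, D.IsPathComp col C₂ k true false) ∧
    ∃ c', ∀ C ∈ D.compsIn S, C ≠ C₁ → C ≠ C₂ → ∃ k, Short k ∧ D.IsPathComp col C k c' c'

/-- Type (7): a long cycle and monochromatic short paths, possibly none. -/
def Type7 (S : Set V) : Prop :=
  ∃ C₀ ∈ D.compsIn S, (∃ k, ¬ Short k ∧ D.IsCycleComp C₀ k) ∧
    ∃ c', ∀ C ∈ D.compsIn S, C ≠ C₀ → ∃ k, Short k ∧ D.IsPathComp col C k c' c'

/-- Type (8): a long cycle and a short cycle. -/
def Type8 (S : Set V) : Prop :=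
  ∃ C₁ C₂, C₁ ≠ C₂ ∧ (∃ k, ¬ Short k ∧ D.IsCycleComp C₁ k) ∧
    (∃ k, Short k ∧ D.IsCycleComp C₂ k) ∧ D.compsIn S = {C₁, C₂}

end Digraph

/-! ## Good and uniform permutations -/

/-- `π` is a `w`-good permutation of `δ(w)`: `{e, σ_w(π(e))}` is a matching for every
`e ∈ δ(w)`. -/
def WGood {V E : Type*} (G : Multigraph V E) (w : V) (σw : E → E) (π : E → E) : Prop :=
  ∀ e ∈ G.edgeNbhd w, G.IsMatchingPair e (σw (π e))

/-- `O` is an orbit of the map `g`. -/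
def IsOrbitOf {α : Type*} (g : α → α) (O : Set α) : Prop :=
  ∃ p ∈ O, O = {q | ∃ t : ℕ, g^[t] p = q}

/-- A `w`-good permutation `π` of `δ(w)` is uniform if the induced permutation `π⁽²⁾` of
the 2-element subsets of `δ(w)` has a list of orbits `X₁, …, X_t` such that (i) paired
edges share no vertex other than `w` or `μ(w)`, and (ii) every edge of `δ(w)` is covered
the same number `c > 0` of times by the members of the orbits in the list. -/
def UniformPerm {V E : Type*} (G : Multigraph V E) (μ : V → V) (w : V) (π : E → E) : Prop :=
  ∃ Xs : List (Set (Sym2 E)),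
    (∀ X ∈ Xs, IsOrbitOf (Sym2.map π) X ∧
      ∀ q ∈ X, ¬ q.IsDiag ∧ ∀ x ∈ q, x ∈ G.edgeNbhd w) ∧
    (∀ X ∈ Xs, ∀ x y : E, s(x, y) ∈ X →
      ∀ z : V, z ∈ G.ends x → z ∈ G.ends y → z = w ∨ z = μ w) ∧
    (∃ c : ℕ, 0 < c ∧ ∀ e ∈ G.edgeNbhd w,
      (Xs.map fun X => {F | F ∈ X ∧ e ∈ F}.ncard).sum = c)

/-! ## The auxiliary directed graph at a vertex -/

/-- The vertex set of the auxiliary directed graph `D` at `w`: the disjoint union of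
`{e₁, …, e_m} = δ(w)` and `{f₁, …, f_m} = δ(μ(w))`. -/
def AuxV {V E : Type*} (G : Multigraph V E) (μ : V → V) (w : V) : Type _ :=
  {e // e ∈ G.edgeNbhd w} ⊕ {f // f ∈ G.edgeNbhd (μ w)}

/-- The edges of the auxiliary directed graph: an edge from `fᵢ` to `eᵢ` (where
`fᵢ = σ_w(eᵢ)`) for each `i`, and an edge from `eᵢ` to `fⱼ` whenever `eᵢ` and `fⱼ` denote
the same edge of `G`. -/
def auxBase {V E : Type*} (G : Multigraph V E) (μ : V → V) (w : V) (σw : E → E) :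
    AuxV G μ w → AuxV G μ w → Prop := fun x y =>
  (∃ f e, x = Sum.inr f ∧ y = Sum.inl e ∧ σw (e : E) = (f : E)) ∨
  (∃ e f, x = Sum.inl e ∧ y = Sum.inr f ∧ (e : E) = (f : E))

/-- The coloring of the vertices of the auxiliary directed graph (`true` = red,
`false` = blue). -/
def auxCol {V E : Type*} (G : Multigraph V E) (μ : V → V) (w u : V) :
    AuxV G μ w → Option Bool
  | Sum.inl e =>
      if u ∈ G.ends (e : E) then some true
      else if μ u ∈ G.ends (e : E) then some false else none
  | Sum.inr f =>
      if u ∈ G.ends (f : E) then some false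
      else if μ u ∈ G.ends (f : E) then some true else none

/-- `st` is (the edge relation of) a completion `D'` of the auxiliary directed graph `D`:
it is obtained from `D` by adding one edge from each vertex of out-degree 0 to a vertex of
in-degree 0 with the same color, so that every vertex has in-degree 1 and out-degree 1. -/
def IsCompletion {V E : Type*} (G : Multigraph V E) (μ : V → V) (w u : V) (σw : E → E)
    (st : AuxV G μ w → AuxV G μ w → Prop) : Prop :=
  (∀ x y, auxBase G μ w σw x y → st x y) ∧
  (∀ x y, st x y → ¬ auxBase G μ w σw x y →
    (∀ z, ¬ auxBase G μ w σw x z) ∧ (∀ z, ¬ auxBase G μ w σw z y) ∧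
    (auxCol G μ w u x).isSome ∧ auxCol G μ w u x = auxCol G μ w u y) ∧
  (∀ x, ∃! y, st x y) ∧ (∀ y, ∃! x, st x y)

/-- `π` is the permutation of `δ(w)` induced by the completion `st`: `π(eᵢ) = eⱼ` if and
only if `D'` has a directed walk of length two from `eᵢ` to `eⱼ`. -/
def InducedByWalks {V E : Type*} (G : Multigraph V E) (μ : V → V) (w : V)
    (st : AuxV G μ w → AuxV G μ w → Prop) (π : E → E) : Prop :=
  ∀ e (he : e ∈ G.edgeNbhd w) e' (he' : e' ∈ G.edgeNbhd w),
    (π e = e' ↔ ∃ mid, st (Sum.inl ⟨e, he⟩) mid ∧ st mid (Sum.inl ⟨e', he'⟩))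


namespace Stmt3Aux

structure Dat where
  k : ℕ
  m : Fin k → ℕ
  hk : 0 < k
  hm : ∀ i, 0 < m i

namespace Dat

variable (d : Dat)

abbrev I : Type := Σ i : Fin d.k, Fin (d.m i)

def i0 : Fin d.k := ⟨0, d.hk⟩

def base : d.I := ⟨d.i0, ⟨0, d.hm _⟩⟩

abbrev J : Type := {p : d.I // p ≠ d.base}

abbrev F : Type := FreeGroup d.J

def X (p : d.I) : d.F := if h : p = d.base then 1 else FreeGroup.of ⟨p, h⟩

def x (i : Fin d.k) (j : ℕ) : d.F := d.X ⟨i, ⟨j % d.m i, Nat.mod_lt _ (d.hm i)⟩⟩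

lemma mk_eq_base_iff (i : Fin d.k) (r : ℕ) (hr : r < d.m i) :
    (⟨i, ⟨r, hr⟩⟩ : d.I) = d.base ↔ i = d.i0 ∧ r = 0 := by
  constructor
  · intro h
    obtain ⟨h1, h2⟩ := Sigma.mk.inj_iff.mp h
    subst h1
    refine ⟨rfl, ?_⟩
    have := eq_of_heq h2
    exact congrArg Fin.val this
  · rintro ⟨rfl, rfl⟩
    rfl

lemma x_congr {i : Fin d.k} {j j' : ℕ} (h : j % d.m i = j' % d.m i) :
    d.x i j = d.x i j' := by
  have h2 : (⟨j % d.m i, Nat.mod_lt _ (d.hm i)⟩ : Fin (d.m i)) = ⟨j' % d.m i, Nat.mod_lt _ (d.hm i)⟩ :=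
    Fin.ext h
  unfold x
  rw [h2]

lemma x_add_left_mod (i : Fin d.k) (j r : ℕ) :
    d.x i (j % d.m i + r) = d.x i (j + r) :=
  d.x_congr (Nat.mod_add_mod _ _ _)

lemma x_add_m (i : Fin d.k) (j : ℕ) : d.x i (j + d.m i) = d.x i j :=
  d.x_congr (Nat.add_mod_right j (d.m i))

lemma x_add_mul (i : Fin d.k) (j t : ℕ) : d.x i (j + d.m i * t) = d.x i j := by
  induction t with
  | zero => rfl
  | succ t ih =>
      have h : j + d.m i * (t + 1) = (j + d.m i * t) + d.m i := by ring
      rw [h, d.x_add_m, ih]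

lemma x_mod (i : Fin d.k) (j : ℕ) : d.x i (j % d.m i) = d.x i j := by
  conv_rhs => rw [← Nat.mod_add_div j (d.m i)]
  exact (d.x_add_mul i (j % d.m i) (j / d.m i)).symm

lemma x_i0_eq_one {j : ℕ} (h : d.m d.i0 ∣ j) : d.x d.i0 j = 1 := by
  unfold x X
  rw [dif_pos]
  rw [d.mk_eq_base_iff]
  exact ⟨rfl, Nat.mod_eq_zero_of_dvd h⟩

lemma of_eq_x (p : d.J) : (FreeGroup.of p : d.F) = d.x p.1.1 p.1.2 := by
  unfold x
  have h2 : (⟨(p.1.2 : ℕ) % d.m p.1.1, Nat.mod_lt _ (d.hm _)⟩ : Fin (d.m p.1.1)) = p.1.2 :=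
    Fin.ext (Nat.mod_eq_of_lt p.1.2.isLt)
  rw [h2]
  have h3 : (⟨p.1.1, p.1.2⟩ : d.I) = p.1 := rfl
  rw [h3, X, dif_neg p.2]

def aF : d.F →* d.F :=
  FreeGroup.lift fun p : d.J => d.x p.1.1 ((p.1.2 : ℕ) + 1) * (d.x d.i0 1)⁻¹

def aB : d.F →* d.F :=
  FreeGroup.lift fun p : d.J =>
    d.x p.1.1 ((p.1.2 : ℕ) + (d.m p.1.1 - 1)) * (d.x d.i0 (d.m d.i0 - 1))⁻¹

lemma aF_x (i : Fin d.k) (j : ℕ) :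
    d.aF (d.x i j) = d.x i (j + 1) * (d.x d.i0 1)⁻¹ := by
  by_cases hb : (⟨i, ⟨j % d.m i, Nat.mod_lt _ (d.hm i)⟩⟩ : d.I) = d.base
  · obtain ⟨h1, h2⟩ := (d.mk_eq_base_iff _ _ _).mp hb
    have hx : d.x i j = 1 := by unfold x X; rw [dif_pos hb]
    have hx2 : d.x i (j + 1) = d.x i 1 := by
      rw [← d.x_add_left_mod i j 1, h2]
    rw [hx, map_one, hx2, h1]
    exact (mul_inv_cancel _).symm
  · have hx : d.x i j = FreeGroup.of ⟨_, hb⟩ := by unfold x X; rw [dif_neg hb]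
    rw [hx, aF, FreeGroup.lift_apply_of]
    rw [d.x_add_left_mod i j 1]

lemma aB_x (i : Fin d.k) (j : ℕ) :
    d.aB (d.x i j) = d.x i (j + (d.m i - 1)) * (d.x d.i0 (d.m d.i0 - 1))⁻¹ := by
  by_cases hb : (⟨i, ⟨j % d.m i, Nat.mod_lt _ (d.hm i)⟩⟩ : d.I) = d.base
  · obtain ⟨h1, h2⟩ := (d.mk_eq_base_iff _ _ _).mp hb
    have hx : d.x i j = 1 := by unfold x X; rw [dif_pos hb]
    have hx2 : d.x i (j + (d.m i - 1)) = d.x i (d.m i - 1) := by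
      rw [← d.x_add_left_mod i j _, h2, Nat.zero_add]
    rw [hx, map_one, hx2, h1]
    exact (mul_inv_cancel _).symm
  · have hx : d.x i j = FreeGroup.of ⟨_, hb⟩ := by unfold x X; rw [dif_neg hb]
    rw [hx, aB, FreeGroup.lift_apply_of]
    rw [d.x_add_left_mod]

lemma sub_one_add_one (i : Fin d.k) : d.m i - 1 + 1 = d.m i :=
  Nat.succ_pred_eq_of_pos (d.hm i)

lemma aF_aB : d.aF.comp d.aB = MonoidHom.id d.F := by
  apply FreeGroup.ext_hom
  intro p
  rw [MonoidHom.comp_apply, MonoidHom.id_apply, d.of_eq_x p]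
  rw [d.aB_x, map_mul, map_inv, d.aF_x, d.aF_x]
  rw [show (p.1.2 : ℕ) + (d.m p.1.1 - 1) + 1 = (p.1.2 : ℕ) + d.m p.1.1 by
    have := d.hm p.1.1; omega]
  rw [d.x_add_m, d.sub_one_add_one, d.x_i0_eq_one dvd_rfl]
  group

lemma aB_aF : d.aB.comp d.aF = MonoidHom.id d.F := by
  apply FreeGroup.ext_hom
  intro p
  rw [MonoidHom.comp_apply, MonoidHom.id_apply, d.of_eq_x p]
  rw [d.aF_x, map_mul, map_inv, d.aB_x, d.aB_x]
  rw [show (p.1.2 : ℕ) + 1 + (d.m p.1.1 - 1) = (p.1.2 : ℕ) + d.m p.1.1 by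
    have := d.hm p.1.1; omega]
  rw [show (1 : ℕ) + (d.m d.i0 - 1) = d.m d.i0 by have := d.hm d.i0; omega]
  rw [d.x_add_m, d.x_i0_eq_one dvd_rfl]
  group

/-- The rotation automorphism. -/
def alpha : MulAut d.F := MonoidHom.toMulEquiv d.aF d.aB d.aB_aF d.aF_aB

lemma alpha_apply (w : d.F) : d.alpha w = d.aF w := rfl

lemma alpha_x (i : Fin d.k) (j : ℕ) :
    d.alpha (d.x i j) = d.x i (j + 1) * (d.x d.i0 1)⁻¹ := d.aF_x i j

lemma alpha_pow_x (r : ℕ) (i : Fin d.k) (j : ℕ) :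
    (d.alpha ^ r) (d.x i j) = d.x i (j + r) * (d.x d.i0 r)⁻¹ := by
  induction r generalizing i j with
  | zero =>
      rw [pow_zero]
      rw [d.x_i0_eq_one (dvd_zero _ )]
      simp
  | succ r ih =>
      rw [pow_succ, MulAut.mul_apply, d.alpha_x, map_mul, map_inv, ih, ih]
      rw [show j + 1 + r = j + (r + 1) by omega, show (1 : ℕ) + r = r + 1 by omega]
      group

lemma alpha_pow_eq_one {r : ℕ} (h : ∀ i, d.m i ∣ r) : d.alpha ^ r = 1 := by
  have key : ∀ p : d.J, (d.alpha ^ r) (FreeGroup.of p) = FreeGroup.of p := by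
    intro p
    rw [d.of_eq_x p, d.alpha_pow_x]
    rw [d.x_i0_eq_one (h _), inv_one, mul_one]
    obtain ⟨t, rfl⟩ := h p.1.1
    exact d.x_add_mul _ _ _
  ext w
  exact DFunLike.congr_fun (FreeGroup.ext_hom ((d.alpha ^ r : MulAut d.F) : d.F →* d.F)
    (MonoidHom.id d.F) key) w

end Dat


section Part2

lemma lift_map {β γ H : Type*} [Group H] (f : γ → H) (g : β → γ) (w : FreeGroup β) :
    FreeGroup.lift f (FreeGroup.map g w) = FreeGroup.lift (fun a => f (g a)) w :=
  DFunLike.congr_fun (FreeGroup.ext_hom ((FreeGroup.lift f).comp (FreeGroup.map g))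
    (FreeGroup.lift fun a => f (g a)) (by intro a; simp)) w

lemma relmk {α : Type*} {rels : Set (FreeGroup α)} {r : FreeGroup α} (h : r ∈ rels) :
    PresentedGroup.mk rels r = 1 :=
  (QuotientGroup.eq_one_iff r).mpr (Subgroup.subset_normalClosure h)

namespace Dat

variable (d : Dat)

def U : List (FreeGroup (Fin 1)) := List.ofFn fun i : Fin d.k => (FreeGroup.of (0 : Fin 1)) ^ (d.m i)

lemma hlen : d.U.length = d.k := List.length_ofFn

abbrev G : Type := Double d.U

def A : d.G := PresentedGroup.of (Sum.inl (Sum.inl 0))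
def B : d.G := PresentedGroup.of (Sum.inl (Sum.inr 0))
def T (j : Fin (d.U.length - 1)) : d.G := PresentedGroup.of (Sum.inr j)

lemma sidx_lt (j : Fin (d.U.length - 1)) : (j : ℕ) + 1 < d.k := by
  have h1 := j.isLt
  have h2 := d.hlen
  omega

def sidx (j : Fin (d.U.length - 1)) : Fin d.k := ⟨(j : ℕ) + 1, d.sidx_lt j⟩

lemma sidx_pred (i : Fin d.k) (h : ¬ (i : ℕ) = 0)
    (hlt : (i : ℕ) - 1 < d.U.length - 1) : d.sidx ⟨(i : ℕ) - 1, hlt⟩ = i :=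
  Fin.ext (by show (i : ℕ) - 1 + 1 = (i : ℕ); omega)

def phi : Multiplicative ℤ →* MulAut d.F := zpowersHom _ d.alpha

abbrev P : Type := SemidirectProduct d.F (Multiplicative ℤ) d.phi

lemma phi_nat (r : ℕ) : d.phi (Multiplicative.ofAdd (r : ℤ)) = d.alpha ^ r := by
  rw [phi, zpowersHom_apply, toAdd_ofAdd, zpow_natCast]

def ThA : d.P := ⟨1, Multiplicative.ofAdd 1⟩
def ThB : d.P := ⟨(d.x d.i0 1)⁻¹, Multiplicative.ofAdd 1⟩

lemma ThA_eq_inr : d.ThA = SemidirectProduct.inr (Multiplicative.ofAdd 1) := by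
  rw [ThA, SemidirectProduct.mk_eq_inl_mul_inr, map_one, one_mul]

lemma ThA_pow (r : ℕ) : d.ThA ^ r = ⟨1, Multiplicative.ofAdd (r : ℤ)⟩ := by
  induction r with
  | zero => rfl
  | succ r ih =>
      rw [pow_succ, ih, ThA, SemidirectProduct.mul_def]
      have h1 : (1 : d.F) * d.phi (Multiplicative.ofAdd (r : ℤ)) 1 = 1 := by
        rw [map_one, mul_one]
      have h2 : Multiplicative.ofAdd (r : ℤ) * Multiplicative.ofAdd 1
          = Multiplicative.ofAdd ((r + 1 : ℕ) : ℤ) := by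
        rw [← ofAdd_add]; norm_num
      rw [h1, h2]

lemma ThB_pow (r : ℕ) : d.ThB ^ r = ⟨(d.x d.i0 r)⁻¹, Multiplicative.ofAdd (r : ℤ)⟩ := by
  induction r with
  | zero =>
      rw [pow_zero]
      rw [d.x_i0_eq_one (dvd_zero _), inv_one]
      rfl
  | succ r ih =>
      rw [pow_succ, ih, ThB, SemidirectProduct.mul_def]
      have h1 : (d.x d.i0 r)⁻¹ * d.phi (Multiplicative.ofAdd (r : ℤ)) (d.x d.i0 1)⁻¹
          = (d.x d.i0 (r + 1))⁻¹ := by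
        rw [d.phi_nat, map_inv, d.alpha_pow_x]
        rw [show (1 : ℕ) + r = r + 1 from by omega]
        group
      have h2 : Multiplicative.ofAdd (r : ℤ) * Multiplicative.ofAdd 1
          = Multiplicative.ofAdd ((r + 1 : ℕ) : ℤ) := by
        rw [← ofAdd_add]; norm_num
      rw [h1, h2]

def fgen : (Fin 1 ⊕ Fin 1) ⊕ Fin (d.U.length - 1) → d.P
  | .inl (.inl _) => d.ThA
  | .inl (.inr _) => d.ThB
  | .inr j => SemidirectProduct.inl (d.x (d.sidx j) 0)

lemma get_U (i : Fin d.U.length) :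
    d.U.get i = FreeGroup.of (0 : Fin 1) ^ d.m (Fin.cast d.hlen i) :=
  List.get_ofFn _ _

lemma mk_toA (i : Fin d.U.length) :
    PresentedGroup.mk (doubleRels d.U) (toA (d.U.length - 1) (d.U.get i))
      = d.A ^ d.m (Fin.cast d.hlen i) := by
  rw [d.get_U, map_pow, map_pow]
  rfl

lemma mk_toB (i : Fin d.U.length) :
    PresentedGroup.mk (doubleRels d.U) (toB (d.U.length - 1) (d.U.get i))
      = d.B ^ d.m (Fin.cast d.hlen i) := by
  rw [d.get_U, map_pow, map_pow]
  rfl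

lemma lift_toA (i : Fin d.U.length) :
    FreeGroup.lift d.fgen (toA (d.U.length - 1) (d.U.get i))
      = d.ThA ^ d.m (Fin.cast d.hlen i) := by
  rw [toA, lift_map, d.get_U, map_pow, FreeGroup.lift_apply_of]
  rfl

lemma lift_toB (i : Fin d.U.length) :
    FreeGroup.lift d.fgen (toB (d.U.length - 1) (d.U.get i))
      = d.ThB ^ d.m (Fin.cast d.hlen i) := by
  rw [toB, lift_map, d.get_U, map_pow, FreeGroup.lift_apply_of]
  rfl

lemma conj_lemma (i : Fin d.k) :
    (SemidirectProduct.inl (d.x i 0))⁻¹ * d.ThA ^ d.m i * SemidirectProduct.inl (d.x i 0)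
      = d.ThB ^ d.m i := by
  rw [d.ThA_pow, d.ThB_pow, ← map_inv]
  ext
  · simp only [SemidirectProduct.mul_left, SemidirectProduct.mul_right,
      SemidirectProduct.left_inl, SemidirectProduct.right_inl, map_one, one_mul, mul_one,
      MulAut.one_apply]
    rw [d.phi_nat, d.alpha_pow_x, d.x_add_m]
    group
  · simp only [SemidirectProduct.mul_right, SemidirectProduct.right_inl, one_mul, mul_one]

lemma hrels : ∀ r ∈ doubleRels d.U, FreeGroup.lift d.fgen r = 1 := by
  rintro r ⟨i, (⟨h0, rfl⟩ | ⟨j, hj, rfl⟩)⟩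
  · rw [map_mul, map_inv, d.lift_toA, d.lift_toB]
    have hc : Fin.cast d.hlen i = d.i0 := Fin.ext h0
    rw [hc, d.ThA_pow, d.ThB_pow, d.x_i0_eq_one dvd_rfl, inv_one, mul_inv_cancel]
  · rw [map_mul, map_mul, map_mul, map_inv, map_inv, d.lift_toA, d.lift_toB,
      FreeGroup.lift_apply_of]
    have hc : Fin.cast d.hlen i = d.sidx j := Fin.ext hj
    rw [hc]
    have h1 : d.fgen (Sum.inr j) = SemidirectProduct.inl (d.x (d.sidx j) 0) := rfl
    rw [h1, d.conj_lemma, mul_inv_cancel]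

/-- The homomorphism from the double to the semidirect product. -/
def theta : d.G →* d.P := PresentedGroup.toGroup d.hrels

lemma theta_A : d.theta d.A = d.ThA := PresentedGroup.toGroup.of d.hrels
lemma theta_B : d.theta d.B = d.ThB := PresentedGroup.toGroup.of d.hrels
lemma theta_T (j : Fin (d.U.length - 1)) :
    d.theta (d.T j) = SemidirectProduct.inl (d.x (d.sidx j) 0) :=
  PresentedGroup.toGroup.of d.hrels

/-! Now the inverse homomorphism. -/

def Tsel (i : Fin d.k) : d.G :=
  if h : (i : ℕ) = 0 then 1 else
    d.T ⟨(i : ℕ) - 1, by have h1 := i.isLt; have h2 := d.hlen; omega⟩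

lemma Tsel_i0 : d.Tsel d.i0 = 1 := dif_pos rfl

def yD (i : Fin d.k) (j : ℕ) : d.G := d.A ^ j * d.Tsel i * (d.B ^ j)⁻¹

lemma iw0_lt : 0 < d.U.length := by have := d.hlen; have := d.hk; omega

lemma relAB : d.A ^ d.m d.i0 = d.B ^ d.m d.i0 := by
  have hmem : toA (d.U.length - 1) (d.U.get ⟨0, d.iw0_lt⟩)
      * (toB (d.U.length - 1) (d.U.get ⟨0, d.iw0_lt⟩))⁻¹ ∈ doubleRels d.U :=
    ⟨⟨0, d.iw0_lt⟩, Or.inl ⟨rfl, rfl⟩⟩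
  have h1 := relmk hmem
  rw [map_mul, map_inv, d.mk_toA, d.mk_toB] at h1
  have hc : Fin.cast d.hlen (⟨0, d.iw0_lt⟩ : Fin d.U.length) = d.i0 := Fin.ext rfl
  rw [hc] at h1
  exact mul_inv_eq_one.mp h1

lemma relT (i : Fin d.k) : d.A ^ d.m i * d.Tsel i = d.Tsel i * d.B ^ d.m i := by
  by_cases h : (i : ℕ) = 0
  · have hi : i = d.i0 := Fin.ext h
    rw [hi, d.Tsel_i0, mul_one, one_mul, d.relAB]
  · have hlt : (i : ℕ) - 1 < d.U.length - 1 := by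
      have h1 := i.isLt; have h2 := d.hlen; omega
    set j : Fin (d.U.length - 1) := ⟨(i : ℕ) - 1, hlt⟩ with hjdef
    have hiw : (i : ℕ) < d.U.length := by have h1 := i.isLt; have h2 := d.hlen; omega
    have hmem : (FreeGroup.of (Sum.inr j))⁻¹ * toA (d.U.length - 1) (d.U.get ⟨(i : ℕ), hiw⟩)
        * FreeGroup.of (Sum.inr j)
        * (toB (d.U.length - 1) (d.U.get ⟨(i : ℕ), hiw⟩))⁻¹ ∈ doubleRels d.U :=
      ⟨⟨(i : ℕ), hiw⟩, Or.inr ⟨j, by simp [hjdef]; omega, rfl⟩⟩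
    have h1 := relmk hmem
    rw [map_mul, map_mul, map_mul, map_inv, map_inv, d.mk_toA, d.mk_toB] at h1
    have hc : Fin.cast d.hlen (⟨(i : ℕ), hiw⟩ : Fin d.U.length) = i := Fin.ext rfl
    rw [hc] at h1
    have hT : d.Tsel i = PresentedGroup.mk (doubleRels d.U) (FreeGroup.of (Sum.inr j)) := by
      rw [Tsel, dif_neg h]
      rfl
    rw [← hT] at h1
    rw [mul_inv_eq_one] at h1
    calc d.A ^ d.m i * d.Tsel i
        = d.Tsel i * ((d.Tsel i)⁻¹ * d.A ^ d.m i * d.Tsel i) := by group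
      _ = d.Tsel i * d.B ^ d.m i := by rw [h1]

lemma yD_add_m (i : Fin d.k) (j : ℕ) : d.yD i (j + d.m i) = d.yD i j := by
  unfold yD
  rw [pow_add, pow_add, mul_assoc (d.A ^ j), d.relT, mul_inv_rev]
  group

lemma yD_add_mul (i : Fin d.k) (j t : ℕ) : d.yD i (j + d.m i * t) = d.yD i j := by
  induction t with
  | zero => rfl
  | succ t ih =>
      have h : j + d.m i * (t + 1) = (j + d.m i * t) + d.m i := by ring
      rw [h, d.yD_add_m, ih]

lemma yD_mod (i : Fin d.k) (j : ℕ) : d.yD i (j % d.m i) = d.yD i j := by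
  conv_rhs => rw [← Nat.mod_add_div j (d.m i)]
  exact (d.yD_add_mul i (j % d.m i) (j / d.m i)).symm

def f1 : d.F →* d.G := FreeGroup.lift fun p : d.J => d.yD p.1.1 p.1.2

def f2 : Multiplicative ℤ →* d.G := zpowersHom _ d.A

lemma yD_i0_zero : d.yD d.i0 0 = 1 := by
  rw [yD, d.Tsel_i0]
  simp

lemma f1_x (i : Fin d.k) (j : ℕ) : d.f1 (d.x i j) = d.yD i j := by
  by_cases hb : (⟨i, ⟨j % d.m i, Nat.mod_lt _ (d.hm i)⟩⟩ : d.I) = d.base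
  · obtain ⟨h1, h2⟩ := (d.mk_eq_base_iff _ _ _).mp hb
    have hx : d.x i j = 1 := by unfold x X; rw [dif_pos hb]
    rw [hx, map_one, ← d.yD_mod, h2, h1, d.yD_i0_zero]
  · have hx : d.x i j = FreeGroup.of ⟨_, hb⟩ := by unfold x X; rw [dif_neg hb]
    rw [hx, f1, FreeGroup.lift_apply_of]
    exact d.yD_mod i j

lemma yD_i0_one : d.yD d.i0 1 = d.A * d.B⁻¹ := by
  rw [yD, d.Tsel_i0, pow_one, pow_one, mul_one]

lemma key1 (w : d.F) : d.f1 (d.alpha w) = d.A * d.f1 w * d.A⁻¹ := by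
  have h := FreeGroup.ext_hom (d.f1.comp d.alpha.toMonoidHom)
      ((MulAut.conj d.A).toMonoidHom.comp d.f1) ?_
  · exact DFunLike.congr_fun h w
  · intro p
    simp only [MonoidHom.comp_apply, MulEquiv.coe_toMonoidHom, MulAut.conj_apply]
    rw [d.of_eq_x p, d.alpha_x, map_mul, map_inv, d.f1_x, d.f1_x, d.f1_x, d.yD_i0_one]
    unfold yD
    rw [pow_succ' d.A, pow_succ' d.B]
    group

lemma keyz (n : ℤ) (w : d.F) : d.f1 ((d.alpha ^ n) w) = d.A ^ n * d.f1 w * (d.A ^ n)⁻¹ := by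
  induction n using Int.induction_on generalizing w with
  | zero => simp
  | succ n ih =>
      rw [zpow_add_one, MulAut.mul_apply, ih, d.key1, zpow_add_one]
      group
  | pred n ih =>
      rw [zpow_sub_one, MulAut.mul_apply]
      have h1 : d.f1 (d.alpha⁻¹ w) = d.A⁻¹ * d.f1 w * d.A := by
        have h2 := d.key1 (d.alpha⁻¹ w)
        rw [show d.alpha (d.alpha⁻¹ w) = w from by
          rw [← MulAut.mul_apply, mul_inv_cancel]; rfl] at h2
        rw [h2]
        group
      rw [ih, h1, zpow_sub_one]
      group

lemma hcomp : ∀ g : Multiplicative ℤ,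
    d.f1.comp (d.phi g).toMonoidHom = (MulAut.conj (d.f2 g)).toMonoidHom.comp d.f1 := by
  intro g
  refine MonoidHom.ext fun w => ?_
  simp only [MonoidHom.comp_apply, MulEquiv.coe_toMonoidHom, MulAut.conj_apply]
  rw [show (d.phi g) w = (d.alpha ^ g.toAdd) w from by rw [phi, zpowersHom_apply]]
  rw [show d.f2 g = d.A ^ g.toAdd from by rw [f2, zpowersHom_apply]]
  exact d.keyz _ w

def psi : d.P →* d.G := SemidirectProduct.lift d.f1 d.f2 d.hcomp

lemma theta_Tsel (i : Fin d.k) : d.theta (d.Tsel i) = SemidirectProduct.inl (d.x i 0) := by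
  by_cases h : (i : ℕ) = 0
  · rw [Tsel, dif_pos h, map_one]
    have hi : i = d.i0 := Fin.ext h
    rw [hi, d.x_i0_eq_one (dvd_zero _), map_one]
  · rw [Tsel, dif_neg h, d.theta_T, d.sidx_pred i h]

lemma ThA_pow_inr (j : ℕ) :
    d.ThA ^ j = SemidirectProduct.inr (Multiplicative.ofAdd (j : ℤ)) := by
  rw [d.ThA_pow, SemidirectProduct.mk_eq_inl_mul_inr, map_one, one_mul]

lemma ThB_pow_inv (j : ℕ) :
    (d.ThB ^ j)⁻¹ = (SemidirectProduct.inr (Multiplicative.ofAdd (j : ℤ)))⁻¹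
      * SemidirectProduct.inl (d.x d.i0 j) := by
  rw [d.ThB_pow, SemidirectProduct.mk_eq_inl_mul_inr, mul_inv_rev]
  rw [show (SemidirectProduct.inl ((d.x d.i0 j)⁻¹) : d.P)⁻¹ = SemidirectProduct.inl (d.x d.i0 j)
    from by rw [← map_inv, inv_inv]]

lemma theta_yD (i : Fin d.k) (j : ℕ) :
    d.theta (d.yD i j) = SemidirectProduct.inl (d.x i j) := by
  rw [yD, map_mul, map_mul, map_inv, map_pow, map_pow, d.theta_A, d.theta_B, d.theta_Tsel,
    d.ThA_pow_inr, d.ThB_pow_inv]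
  calc SemidirectProduct.inr (Multiplicative.ofAdd (j : ℤ)) * SemidirectProduct.inl (d.x i 0)
        * ((SemidirectProduct.inr (Multiplicative.ofAdd (j : ℤ)))⁻¹
          * SemidirectProduct.inl (d.x d.i0 j))
      = (SemidirectProduct.inr (Multiplicative.ofAdd (j : ℤ)) * SemidirectProduct.inl (d.x i 0)
        * (SemidirectProduct.inr (Multiplicative.ofAdd (j : ℤ)))⁻¹)
          * SemidirectProduct.inl (d.x d.i0 j) := by rw [← mul_assoc]
    _ = (SemidirectProduct.inr (Multiplicative.ofAdd (j : ℤ)) * SemidirectProduct.inl (d.x i 0)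
        * SemidirectProduct.inr (Multiplicative.ofAdd (j : ℤ))⁻¹)
          * SemidirectProduct.inl (d.x d.i0 j) := by rw [← map_inv]
    _ = SemidirectProduct.inl (d.phi (Multiplicative.ofAdd (j : ℤ)) (d.x i 0))
          * SemidirectProduct.inl (d.x d.i0 j) := by rw [SemidirectProduct.inl_aut]
    _ = SemidirectProduct.inl (d.phi (Multiplicative.ofAdd (j : ℤ)) (d.x i 0) * d.x d.i0 j) :=
          (map_mul _ _ _).symm
    _ = SemidirectProduct.inl (d.x i j) := by
          rw [d.phi_nat, d.alpha_pow_x, Nat.zero_add, inv_mul_cancel_right]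

lemma comp_theta_psi : d.theta.comp d.psi = MonoidHom.id d.P := by
  apply SemidirectProduct.hom_ext
  · apply FreeGroup.ext_hom
    intro p
    simp only [MonoidHom.comp_apply, MonoidHom.id_apply]
    rw [show d.psi (SemidirectProduct.inl (FreeGroup.of p)) = d.f1 (FreeGroup.of p) from
      SemidirectProduct.lift_inl _ _ _ _]
    rw [show d.f1 (FreeGroup.of p) = d.yD p.1.1 p.1.2 from FreeGroup.lift_apply_of]
    rw [d.theta_yD, ← d.of_eq_x]
  · apply MonoidHom.ext_mint
    simp only [MonoidHom.comp_apply, MonoidHom.id_apply]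
    rw [show d.psi (SemidirectProduct.inr (Multiplicative.ofAdd 1))
        = d.f2 (Multiplicative.ofAdd 1) from SemidirectProduct.lift_inr _ _ _ _]
    rw [show d.f2 (Multiplicative.ofAdd 1) = d.A from by rw [f2, zpowersHom_apply]; simp]
    rw [d.theta_A, d.ThA_eq_inr]

lemma comp_psi_theta : d.psi.comp d.theta = MonoidHom.id d.G := by
  apply PresentedGroup.ext
  rintro ((v | v) | j)
  · have hv : v = (0 : Fin 1) := Subsingleton.elim _ _
    subst hv
    simp only [MonoidHom.comp_apply, MonoidHom.id_apply]
    rw [show (PresentedGroup.of (Sum.inl (Sum.inl (0 : Fin 1))) : d.G) = d.A from rfl,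
      d.theta_A, d.ThA_eq_inr]
    rw [show d.psi (SemidirectProduct.inr (Multiplicative.ofAdd 1))
        = d.f2 (Multiplicative.ofAdd 1) from SemidirectProduct.lift_inr _ _ _ _]
    rw [f2, zpowersHom_apply]
    simp
  · have hv : v = (0 : Fin 1) := Subsingleton.elim _ _
    subst hv
    simp only [MonoidHom.comp_apply, MonoidHom.id_apply]
    rw [show (PresentedGroup.of (Sum.inl (Sum.inr (0 : Fin 1))) : d.G) = d.B from rfl,
      d.theta_B, ThB, SemidirectProduct.mk_eq_inl_mul_inr, map_mul]
    rw [show d.psi (SemidirectProduct.inl (d.x d.i0 1)⁻¹) = d.f1 ((d.x d.i0 1)⁻¹) from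
      SemidirectProduct.lift_inl _ _ _ _]
    rw [map_inv]
    rw [show d.psi (SemidirectProduct.inr (Multiplicative.ofAdd 1))
        = d.f2 (Multiplicative.ofAdd 1) from SemidirectProduct.lift_inr _ _ _ _]
    rw [d.f1_x, d.yD_i0_one]
    rw [show d.f2 (Multiplicative.ofAdd 1) = d.A from by rw [f2, zpowersHom_apply]; simp]
    group
  · simp only [MonoidHom.comp_apply, MonoidHom.id_apply]
    rw [show (PresentedGroup.of (Sum.inr j) : d.G) = d.T j from rfl, d.theta_T]
    rw [show d.psi (SemidirectProduct.inl (d.x (d.sidx j) 0)) = d.f1 (d.x (d.sidx j) 0) from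
      SemidirectProduct.lift_inl _ _ _ _]
    rw [d.f1_x, yD, pow_zero, pow_zero, one_mul, inv_one, mul_one, Tsel]
    rw [dif_neg (by simp [sidx])]
    congr 1

/-- The isomorphism between the double and the semidirect product. -/
def iso : d.G ≃* d.P := MonoidHom.toMulEquiv d.theta d.psi d.comp_psi_theta d.comp_theta_psi

end Dat

end Part2

section Part3

namespace Dat

variable (d : Dat)

def chi (MM : ℕ) : d.P →* Multiplicative (ZMod MM) :=
  (AddMonoidHom.toMultiplicative (Int.castAddHom (ZMod MM))).comp SemidirectProduct.rightHom

lemma chi_apply (MM : ℕ) (z : d.P) :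
    d.chi MM z = Multiplicative.ofAdd ((Multiplicative.toAdd z.right : ℤ) : ZMod MM) := rfl

lemma chi_surjective (MM : ℕ) : Function.Surjective (d.chi MM) := by
  intro z
  obtain ⟨n, hn⟩ := ZMod.intCast_surjective (Multiplicative.toAdd z)
  refine ⟨SemidirectProduct.inr (Multiplicative.ofAdd n), ?_⟩
  rw [d.chi_apply]
  have h1 : ((SemidirectProduct.inr (Multiplicative.ofAdd n) : d.P)).right
      = Multiplicative.ofAdd n := rfl
  rw [h1, toAdd_ofAdd, hn]
  rfl

lemma mem_ker_chi (MM : ℕ) (z : d.P) :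
    z ∈ (d.chi MM).ker ↔ (MM : ℤ) ∣ Multiplicative.toAdd z.right := by
  rw [MonoidHom.mem_ker, d.chi_apply, ofAdd_eq_one, ZMod.intCast_zmod_eq_zero_iff_dvd]

lemma alpha_zpow_eq_one {MM : ℕ} (hdvd : ∀ i, d.m i ∣ MM) {n : ℤ} (h : (MM : ℤ) ∣ n) :
    d.alpha ^ n = 1 := by
  obtain ⟨q, rfl⟩ := h
  rw [zpow_mul, zpow_natCast, d.alpha_pow_eq_one hdvd, one_zpow]

/-- The kernel of `chi` is the direct product. -/
def kiso (MM : ℕ) (hdvd : ∀ i, d.m i ∣ MM) (hM0 : MM ≠ 0) :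
    (d.chi MM).ker ≃* d.F × Multiplicative ℤ where
  toFun z := (z.1.left, Multiplicative.ofAdd (Multiplicative.toAdd z.1.right / (MM : ℤ)))
  invFun wn := ⟨⟨wn.1, Multiplicative.ofAdd ((MM : ℤ) * Multiplicative.toAdd wn.2)⟩, by
    rw [d.mem_ker_chi]
    exact ⟨Multiplicative.toAdd wn.2, rfl⟩⟩
  left_inv z := by
    have hd := (d.mem_ker_chi MM z.1).mp z.2
    apply Subtype.ext
    refine SemidirectProduct.ext rfl ?_
    show Multiplicative.ofAdd ((MM : ℤ) * (Multiplicative.toAdd z.1.right / (MM : ℤ)))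
        = z.1.right
    rw [Int.mul_ediv_cancel' hd]
    exact ofAdd_toAdd _
  right_inv wn := by
    refine Prod.ext rfl ?_
    show Multiplicative.ofAdd ((MM : ℤ) * Multiplicative.toAdd wn.2 / (MM : ℤ)) = wn.2
    rw [Int.mul_ediv_cancel_left _ (by exact_mod_cast hM0)]
    exact ofAdd_toAdd _
  map_mul' z1 z2 := by
    have hd1 := (d.mem_ker_chi MM z1.1).mp z1.2
    have hd2 := (d.mem_ker_chi MM z2.1).mp z2.2
    have hcoe : ((z1 * z2 : (d.chi MM).ker) : d.P) = (z1 : d.P) * (z2 : d.P) := rfl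
    refine Prod.ext ?_ ?_
    · show ((z1 : d.P) * (z2 : d.P)).left = (z1 : d.P).left * (z2 : d.P).left
      rw [SemidirectProduct.mul_left]
      congr 1
      rw [show d.phi (z1 : d.P).right = d.alpha ^ (Multiplicative.toAdd (z1 : d.P).right)
        from zpowersHom_apply _ _ _]
      rw [d.alpha_zpow_eq_one hdvd hd1]
      rfl
    · show Multiplicative.ofAdd (Multiplicative.toAdd ((z1 : d.P) * (z2 : d.P)).right / (MM : ℤ))
        = Multiplicative.ofAdd (Multiplicative.toAdd (z1 : d.P).right / (MM : ℤ))
          * Multiplicative.ofAdd (Multiplicative.toAdd (z2 : d.P).right / (MM : ℤ))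
      rw [← ofAdd_add]
      congr 1
      rw [SemidirectProduct.mul_right, toAdd_mul]
      exact Int.add_ediv_of_dvd_left hd1

end Dat

end Part3

end Stmt3Aux

/-! ## The statement -/

theorem stmt3 (k : ℕ) (hk : 0 < k) (m : Fin k → ℕ) (hm : ∀ i, 0 < m i)
    (s M : ℕ) (hs : s + 1 = ∑ i, m i) (hM : M = Finset.univ.lcm m) :
    ∃ H : Subgroup (Double (List.ofFn fun i => (FreeGroup.of (0 : Fin 1)) ^ (m i))),
      H.index = M ∧ Nonempty (H ≃* (Multiplicative ℤ × FreeGroup (Fin s))) := by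
  classical
  let d : Stmt3Aux.Dat := ⟨k, m, hk, hm⟩
  have hdvd : ∀ i : Fin k, m i ∣ M := fun i => hM ▸ Finset.dvd_lcm (Finset.mem_univ i)
  have hM0 : M ≠ 0 := by
    intro h0
    rw [h0] at hM
    rw [eq_comm, Finset.lcm_eq_zero_iff] at hM
    obtain ⟨i, -, hi⟩ := hM
    exact absurd (hi ▸ hm i) (lt_irrefl 0)
  let Φ : d.G →* Multiplicative (ZMod M) := (d.chi M).comp d.iso.toMonoidHom
  refine ⟨Φ.ker, ?_, ?_⟩
  · have hsurj : Function.Surjective Φ :=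
      (d.chi_surjective M).comp d.iso.surjective
    change (Φ.ker : Subgroup d.G).index = M
    rw [Subgroup.index_ker, MonoidHom.range_eq_top.mpr hsurj, Subgroup.card_top]
    rw [Nat.card_congr (Multiplicative.toAdd : Multiplicative (ZMod M) ≃ ZMod M)]
    exact Nat.card_zmod M
  · have h1 : Φ.ker = ((d.chi M).ker).comap d.iso.toMonoidHom :=
      (MonoidHom.comap_ker _ _).symm
    have hmap : Φ.ker.map d.iso.toMonoidHom = (d.chi M).ker := by
      rw [h1, Subgroup.map_comap_eq_self_of_surjective (f := d.iso.toMonoidHom) (by exact d.iso.surjective)]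
    have e1 : Φ.ker ≃* (d.chi M).ker :=
      (MulEquiv.subgroupMap d.iso Φ.ker).trans (MulEquiv.subgroupCongr hmap)
    have h2 : Fintype.card d.I = s + 1 := by
      simp only [Stmt3Aux.Dat.I, Fintype.card_sigma, Fintype.card_fin]
      exact hs.symm
    have h3 : Fintype.card d.J = s := by
      have h4 := Fintype.card_subtype_compl (fun p : d.I => p = d.base)
      rw [Fintype.card_subtype_eq, h2] at h4
      calc Fintype.card d.J
          = Fintype.card {p : d.I // ¬ p = d.base} := Fintype.card_congr (Equiv.refl _)
        _ = s := by rw [h4]; omega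
    have eJ : d.J ≃ Fin s := Fintype.equivFinOfCardEq h3
    exact ⟨e1.trans ((d.kiso M hdvd hM0).trans
      ((MulEquiv.prodComm).trans (MulEquiv.prodCongr (MulEquiv.refl _)
        (FreeGroup.freeGroupCongr eJ))))⟩

end

end KO
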